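/- arXiv:2605.29126 — 3 statements merged into one kernel-verified Lean document; each statement's English description precedes it below -/
import Mathlib

section
/- Let U_M be a real k_M×d matrix, let g : ℝ^{k_M} → ℝ be L-Lipschitz, and define f : ℝ^d → ℝ by f(x) = g(U_M x). Let U be a real k×d matrix with orthonormal rows, and let μ be a probability measure on ℝ^d with isotropic second moments of scale σ² (∫ x_i x_j dμ = σ² δ_{ij}). Then ∫ |f(x) − f(x − UᵀU x)|² dμ(x) ≤ L² σ² ‖U_M Uᵀ‖_F². -/
open MeasureTheory Matrix

/-- The Euclidean norm of a vector in `Fin n → ℝ`. -/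
noncomputable def euclNorm {n : ℕ} (v : Fin n → ℝ) : ℝ := Real.sqrt (v ⬝ᵥ v)

/-- Proposition 3(a): if `g` is `L`-Lipschitz, `f(x) = g(U_M x)`, `U` has
orthonormal rows, and `μ` has isotropic second moments of scale `σ²`, then the
mean-squared ablation effect satisfies
`∫ |f(x) − f(x − UᵀUx)|² dμ ≤ L²σ²‖U_M Uᵀ‖_F²`. -/
theorem stmt_10 {d kM k : ℕ} (UM : Matrix (Fin kM) (Fin d) ℝ) (L : ℝ)
    (g : (Fin kM → ℝ) → ℝ)
    (hg : ∀ a b : Fin kM → ℝ, |g a - g b| ≤ L * euclNorm (a - b))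
    (U : Matrix (Fin k) (Fin d) ℝ) (hU : U * Uᵀ = 1)
    (μ : Measure (Fin d → ℝ)) [IsProbabilityMeasure μ] (σ : ℝ) (hσ : 0 ≤ σ)
    (hint : ∀ i j : Fin d, Integrable (fun x => x i * x j) μ)
    (hiso : ∀ i j : Fin d, ∫ x, x i * x j ∂μ = if i = j then σ ^ 2 else 0) :
    ∫ x, |g (UM.mulVec x) - g (UM.mulVec (x - (Uᵀ * U).mulVec x))| ^ 2 ∂μ
      ≤ L ^ 2 * σ ^ 2 * ∑ a : Fin kM, ∑ b : Fin k, ((UM * Uᵀ) a b) ^ 2 := by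
  set A : Matrix (Fin kM) (Fin d) ℝ := UM * Uᵀ * U with hA
  -- pointwise bound
  have key : ∀ x : Fin d → ℝ,
      |g (UM.mulVec x) - g (UM.mulVec (x - (Uᵀ * U).mulVec x))| ^ 2
        ≤ L ^ 2 * ∑ a, ∑ i, ∑ j, (A a i * A a j) * (x i * x j) := by
    intro x
    have hdiff : UM.mulVec x - UM.mulVec (x - (Uᵀ * U).mulVec x) = A.mulVec x := by
      rw [Matrix.mulVec_sub, sub_sub_cancel, hA]
      simp [Matrix.mulVec_mulVec, Matrix.mul_assoc]
    have hb := hg (UM.mulVec x) (UM.mulVec (x - (Uᵀ * U).mulVec x))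
    rw [hdiff] at hb
    have hnn : (0:ℝ) ≤ A.mulVec x ⬝ᵥ A.mulVec x :=
      Finset.sum_nonneg fun i _ => mul_self_nonneg _
    have hsq : euclNorm (A.mulVec x) ^ 2 = A.mulVec x ⬝ᵥ A.mulVec x :=
      Real.sq_sqrt hnn
    have hdot : A.mulVec x ⬝ᵥ A.mulVec x
        = ∑ a, ∑ i, ∑ j, (A a i * A a j) * (x i * x j) := by
      simp only [dotProduct, Matrix.mulVec, Finset.sum_mul_sum]
      refine Finset.sum_congr rfl fun a _ => Finset.sum_congr rfl fun i _ =>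
        Finset.sum_congr rfl fun j _ => by ring
    calc |g (UM.mulVec x) - g (UM.mulVec (x - (Uᵀ * U).mulVec x))| ^ 2
        ≤ (L * euclNorm (A.mulVec x)) ^ 2 := by
          exact pow_le_pow_left₀ (abs_nonneg _) hb 2
      _ = L ^ 2 * ∑ a, ∑ i, ∑ j, (A a i * A a j) * (x i * x j) := by
          rw [mul_pow, hsq, hdot]
  -- integrability of the bound
  have hterm : ∀ (c : ℝ) (i j : Fin d), Integrable (fun x => c * (x i * x j)) μ :=
    fun c i j => (hint i j).const_mul c
  have hInt2 : ∀ (a : Fin kM) (i : Fin d),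
      Integrable (fun x => ∑ j, (A a i * A a j) * (x i * x j)) μ :=
    fun a i => integrable_finset_sum _ fun j _ => hterm _ i j
  have hInt1 : ∀ (a : Fin kM),
      Integrable (fun x => ∑ i, ∑ j, (A a i * A a j) * (x i * x j)) μ :=
    fun a => integrable_finset_sum _ fun i _ => hInt2 a i
  have hInt0 : Integrable (fun x => ∑ a, ∑ i, ∑ j, (A a i * A a j) * (x i * x j)) μ :=
    integrable_finset_sum _ fun a _ => hInt1 a
  have hIntB : Integrable (fun x => L ^ 2 * ∑ a, ∑ i, ∑ j, (A a i * A a j) * (x i * x j)) μ :=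
    hInt0.const_mul _
  -- compare integrals
  have hle : ∫ x, |g (UM.mulVec x) - g (UM.mulVec (x - (Uᵀ * U).mulVec x))| ^ 2 ∂μ
      ≤ ∫ x, L ^ 2 * ∑ a, ∑ i, ∑ j, (A a i * A a j) * (x i * x j) ∂μ := by
    refine integral_mono_of_nonneg (Filter.Eventually.of_forall fun x => ?_) hIntB
      (Filter.Eventually.of_forall key)
    positivity
  -- compute the integral of the bound
  have hcomp : ∫ x, L ^ 2 * ∑ a, ∑ i, ∑ j, (A a i * A a j) * (x i * x j) ∂μ
      = L ^ 2 * σ ^ 2 * ∑ a, ∑ i, (A a i) ^ 2 := by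
    rw [integral_const_mul, integral_finset_sum _ fun a _ => hInt1 a]
    have : ∀ a : Fin kM, ∫ x, ∑ i, ∑ j, (A a i * A a j) * (x i * x j) ∂μ
        = σ ^ 2 * ∑ i, (A a i) ^ 2 := by
      intro a
      rw [integral_finset_sum _ fun i _ => hInt2 a i]
      have : ∀ i : Fin d, ∫ x, ∑ j, (A a i * A a j) * (x i * x j) ∂μ
          = σ ^ 2 * (A a i) ^ 2 := by
        intro i
        rw [integral_finset_sum _ fun j _ => hterm _ i j]
        have : ∀ j : Fin d, ∫ x, (A a i * A a j) * (x i * x j) ∂μ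
            = (A a i * A a j) * (if i = j then σ ^ 2 else 0) := by
          intro j
          rw [integral_const_mul, hiso i j]
        simp only [this, mul_ite, mul_zero, Finset.sum_ite_eq, Finset.mem_univ, if_true]
        ring
      simp only [this]
      rw [← Finset.mul_sum]
    simp only [this]
    rw [← Finset.mul_sum]
    ring
  -- Frobenius norm identity
  have hfrob : ∑ a, ∑ i, (A a i) ^ 2 = ∑ a : Fin kM, ∑ b : Fin k, ((UM * Uᵀ) a b) ^ 2 := by
    have hAA : A * Aᵀ = (UM * Uᵀ) * (UM * Uᵀ)ᵀ := by
      have hmid : U * (Uᵀ * (U * UMᵀ)) = U * UMᵀ := by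
        rw [← Matrix.mul_assoc, hU, Matrix.one_mul]
      simp only [hA, Matrix.transpose_mul, Matrix.transpose_transpose, Matrix.mul_assoc]
      rw [hmid]
    have h1 : ∀ a : Fin kM, ∑ i, (A a i) ^ 2 = (A * Aᵀ) a a := by
      intro a
      rw [Matrix.mul_apply]
      simp only [Matrix.transpose_apply, sq]
    have h2 : ∀ a : Fin kM, ∑ b : Fin k, ((UM * Uᵀ) a b) ^ 2
        = ((UM * Uᵀ) * (UM * Uᵀ)ᵀ) a a := by
      intro a
      rw [Matrix.mul_apply]
      simp only [Matrix.transpose_apply, sq]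
    simp only [h1, h2, hAA]
  calc ∫ x, |g (UM.mulVec x) - g (UM.mulVec (x - (Uᵀ * U).mulVec x))| ^ 2 ∂μ
      ≤ ∫ x, L ^ 2 * ∑ a, ∑ i, ∑ j, (A a i * A a j) * (x i * x j) ∂μ := hle
    _ = L ^ 2 * σ ^ 2 * ∑ a, ∑ i, (A a i) ^ 2 := hcomp
    _ = L ^ 2 * σ ^ 2 * ∑ a : Fin kM, ∑ b : Fin k, ((UM * Uᵀ) a b) ^ 2 := by rw [hfrob]
end

section
/- Let U_M be a real k_M×d matrix with orthonormal rows, let g : ℝ^{k_M} → ℝ satisfy the one-sided modulus bound |g(a) − g(b)| ≥ L̲·‖a − b‖ for all a, b and some L̲ ≥ 0, and define f : ℝ^d → ℝ by f(x) = g(U_M x). Let U be a real k×d matrix with orthonormal rows whose row space contains the row space of U_M, and let μ be a probability measure on ℝ^d with isotropic second moments of scale σ² (∫ x_i x_j dμ = σ² δ_{ij}). Then ∫ |f(x) − f(x − UᵀU x)|² dμ(x) ≥ L̲² σ² k_M. -/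
open MeasureTheory Matrix

/-- Proposition 3(b): if `U_M` has orthonormal rows, `g` satisfies the
one-sided modulus bound `|g(a) − g(b)| ≥ L̲‖a − b‖`, `f(x) = g(U_M x)`, `U` has
orthonormal rows and its row space contains the row space of `U_M`, and `μ` has
isotropic second moments of scale `σ²`, then the mean-squared ablation effect is at
least `L̲²σ²k_M`. -/
theorem stmt_12 {d kM k : ℕ} (UM : Matrix (Fin kM) (Fin d) ℝ) (hUM : UM * UMᵀ = 1)
    (Llow : ℝ) (hLlow : 0 ≤ Llow) (g : (Fin kM → ℝ) → ℝ)
    (hg : ∀ a b : Fin kM → ℝ, Llow * euclNorm (a - b) ≤ |g a - g b|)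
    (U : Matrix (Fin k) (Fin d) ℝ) (hU : U * Uᵀ = 1)
    (hrow : ∀ a : Fin kM, UM a ∈ Submodule.span ℝ (Set.range fun b : Fin k => U b))
    (μ : Measure (Fin d → ℝ)) [IsProbabilityMeasure μ] (σ : ℝ) (hσ : 0 ≤ σ)
    (hint : ∀ i j : Fin d, Integrable (fun x => x i * x j) μ)
    (hiso : ∀ i j : Fin d, ∫ x, x i * x j ∂μ = if i = j then σ ^ 2 else 0) :
    ENNReal.ofReal (Llow ^ 2 * σ ^ 2 * kM)
      ≤ ∫⁻ x, ENNReal.ofReal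
          (|g (UM.mulVec x) - g (UM.mulVec (x - (Uᵀ * U).mulVec x))| ^ 2) ∂μ := by
  classical
  -- UM = C * U for some C
  choose c hc using fun a => (Submodule.mem_span_range_iff_exists_fun ℝ).mp (hrow a)
  set C : Matrix (Fin kM) (Fin k) ℝ := Matrix.of c with hCdef
  have hCeq : UM = C * U := by
    ext a i
    have := congrFun (hc a) i
    simpa [Matrix.mul_apply, Finset.sum_apply, hCdef] using this.symm
  have hkey : UM * (Uᵀ * U) = UM := by
    rw [hCeq, Matrix.mul_assoc, ← Matrix.mul_assoc U Uᵀ U, hU, Matrix.one_mul]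
  have hzero : ∀ x : Fin d → ℝ, UM.mulVec (x - (Uᵀ * U).mulVec x) = 0 := by
    intro x
    rw [Matrix.mulVec_sub, Matrix.mulVec_mulVec, hkey, sub_self]
  -- pointwise lower bound
  have hdotnn : ∀ {n : ℕ} (v : Fin n → ℝ), 0 ≤ v ⬝ᵥ v := by
    intro n v
    exact Finset.sum_nonneg fun i _ => mul_self_nonneg _
  have hpt : ∀ x : Fin d → ℝ,
      Llow ^ 2 * (UM.mulVec x ⬝ᵥ UM.mulVec x)
        ≤ |g (UM.mulVec x) - g (UM.mulVec (x - (Uᵀ * U).mulVec x))| ^ 2 := by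
    intro x
    rw [hzero x]
    set v := UM.mulVec x
    have h1 : Llow * euclNorm v ≤ |g v - g 0| := by
      simpa using hg v 0
    have h2 : (Llow * euclNorm v) ^ 2 ≤ |g v - g 0| ^ 2 :=
      pow_le_pow_left₀ (mul_nonneg hLlow (Real.sqrt_nonneg _)) h1 2
    calc Llow ^ 2 * (v ⬝ᵥ v) = (Llow * euclNorm v) ^ 2 := by
          rw [mul_pow, euclNorm, Real.sq_sqrt (hdotnn v)]
      _ ≤ |g v - g 0| ^ 2 := h2
  -- the quadratic form expanded
  have hexp : ∀ x : Fin d → ℝ,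
      UM.mulVec x ⬝ᵥ UM.mulVec x
        = ∑ a : Fin kM, ∑ i : Fin d, ∑ j : Fin d, (UM a i * UM a j) * (x i * x j) := by
    intro x
    simp only [dotProduct, Matrix.mulVec, dotProduct]
    refine Finset.sum_congr rfl fun a _ => ?_
    rw [Finset.sum_mul_sum]
    refine Finset.sum_congr rfl fun i _ => Finset.sum_congr rfl fun j _ => ?_
    ring
  -- integrability
  have hFint : Integrable (fun x => Llow ^ 2 * (UM.mulVec x ⬝ᵥ UM.mulVec x)) μ := by
    refine Integrable.const_mul ?_ _
    have : Integrable (fun x => ∑ a : Fin kM, ∑ i : Fin d, ∑ j : Fin d,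
        (UM a i * UM a j) * (x i * x j)) μ := by
      refine integrable_finset_sum _ fun a _ => ?_
      refine integrable_finset_sum _ fun i _ => ?_
      refine integrable_finset_sum _ fun j _ => ?_
      exact (hint i j).const_mul _
    exact this.congr (Filter.Eventually.of_forall fun x => (hexp x).symm)
  -- integral value
  have hdiag : ∀ a : Fin kM, ∑ i : Fin d, UM a i * UM a i = 1 := by
    intro a
    have := congrFun (congrFun hUM a) a
    simpa [Matrix.mul_apply, Matrix.transpose_apply, Matrix.one_apply] using this
  have hint2 : ∫ x, Llow ^ 2 * (UM.mulVec x ⬝ᵥ UM.mulVec x) ∂μ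
      = Llow ^ 2 * σ ^ 2 * kM := by
    rw [integral_const_mul]
    have : ∫ x, UM.mulVec x ⬝ᵥ UM.mulVec x ∂μ = σ ^ 2 * kM := by
      rw [integral_congr_ae (Filter.Eventually.of_forall hexp)]
      rw [integral_finset_sum _ (fun a _ => integrable_finset_sum _ fun i _ =>
        integrable_finset_sum _ fun j _ => (hint i j).const_mul _)]
      have : ∀ a : Fin kM, ∫ x, ∑ i : Fin d, ∑ j : Fin d,
          (UM a i * UM a j) * (x i * x j) ∂μ = σ ^ 2 := by
        intro a
        rw [integral_finset_sum _ (fun i _ => integrable_finset_sum _ fun j _ =>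
          (hint i j).const_mul _)]
        have : ∀ i : Fin d, ∫ x, ∑ j : Fin d, (UM a i * UM a j) * (x i * x j) ∂μ
            = UM a i * UM a i * σ ^ 2 := by
          intro i
          rw [integral_finset_sum _ (fun j _ => (hint i j).const_mul _)]
          have : ∀ j : Fin d, ∫ x, (UM a i * UM a j) * (x i * x j) ∂μ
              = if i = j then UM a i * UM a j * σ ^ 2 else 0 := by
            intro j
            rw [integral_const_mul, hiso i j]
            by_cases h : i = j <;> simp [h]
          rw [Finset.sum_congr rfl fun j _ => this j]
          simp
        rw [Finset.sum_congr rfl fun i _ => this i]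
        rw [← Finset.sum_mul, hdiag a, one_mul]
      rw [Finset.sum_congr rfl fun a _ => this a]
      simp [Finset.sum_const, mul_comm]
    rw [this]; ring
  -- put together
  calc ENNReal.ofReal (Llow ^ 2 * σ ^ 2 * kM)
      = ENNReal.ofReal (∫ x, Llow ^ 2 * (UM.mulVec x ⬝ᵥ UM.mulVec x) ∂μ) := by
        rw [hint2]
    _ = ∫⁻ x, ENNReal.ofReal (Llow ^ 2 * (UM.mulVec x ⬝ᵥ UM.mulVec x)) ∂μ :=
        ofReal_integral_eq_lintegral_ofReal hFint
          (Filter.Eventually.of_forall fun x =>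
            mul_nonneg (sq_nonneg _) (hdotnn _))
    _ ≤ _ := lintegral_mono fun x => ENNReal.ofReal_le_ofReal (hpt x)
end

section
/- Let U_M be a real k_M×d matrix with orthonormal rows, let g : ℝ^{k_M} → ℝ be L-Lipschitz, and define f : ℝ^d → ℝ by f(x) = g(U_M x). Let μ be a probability measure on ℝ^d with isotropic second moments of scale σ² (∫ x_i x_j dμ = σ² δ_{ij}). Let Q be distributed according to the Haar probability measure on the orthogonal group O(d), and let U(Q) be the k×d matrix formed by the first k rows of Q. Then E_Q [ ∫ |f(x) − f(x − U(Q)ᵀU(Q) x)|² dμ(x) ] ≤ L² σ² · k·k_M/d. -/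
open MeasureTheory Matrix

lemma permMat_mem {d : ℕ} (e : Equiv.Perm (Fin d)) :
    (Matrix.of fun x y : Fin d => if y = e x then (1:ℝ) else 0) ∈ Matrix.orthogonalGroup (Fin d) ℝ := by
  rw [Matrix.mem_orthogonalGroup_iff]
  ext x y
  simp only [Matrix.mul_apply, Matrix.star_apply, Matrix.of_apply, star_trivial,
    Matrix.one_apply, ite_mul, one_mul, zero_mul]
  by_cases h : x = y
  · subst h; simp
  · rw [Finset.sum_eq_zero]
    · simp [h]
    · intro z _
      by_cases h1 : z = e x
      · subst h1
        have : ¬ (e x = e y) := fun hc => h (e.injective hc)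
        simp [this]
      · simp [h1]

lemma entry_abs_le {d : ℕ} (Q : Matrix.orthogonalGroup (Fin d) ℝ) (i j : Fin d) :
    |(Q : Matrix (Fin d) (Fin d) ℝ) i j| ≤ 1 := by
  have := entry_norm_bound_of_unitary (𝕜 := ℝ) Q.prop i j
  simpa [Real.norm_eq_abs] using this

lemma entry_cont {d : ℕ} (i j : Fin d) :
    Continuous fun Q : Matrix.orthogonalGroup (Fin d) ℝ => (Q : Matrix (Fin d) (Fin d) ℝ) i j :=
  ((continuous_apply j).comp ((continuous_apply i).comp continuous_subtype_val))

lemma entry_prod_integrable {d : ℕ}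
    [MeasurableSpace (Matrix.orthogonalGroup (Fin d) ℝ)]
    [BorelSpace (Matrix.orthogonalGroup (Fin d) ℝ)]
    (ν : Measure (Matrix.orthogonalGroup (Fin d) ℝ)) [IsFiniteMeasure ν]
    (b c i j : Fin d) :
    Integrable (fun Q : Matrix.orthogonalGroup (Fin d) ℝ =>
      (Q : Matrix (Fin d) (Fin d) ℝ) b i * (Q : Matrix (Fin d) (Fin d) ℝ) c j) ν := by
  refine (integrable_const (1:ℝ)).mono'
    (((entry_cont b i).mul (entry_cont c j)).aestronglyMeasurable) ?_
  filter_upwards with Q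
  rw [Real.norm_eq_abs, abs_mul]
  exact mul_le_one₀ (entry_abs_le Q b i) (abs_nonneg _) (entry_abs_le Q c j)

lemma measurableMul_og {d : ℕ}
    [MeasurableSpace (Matrix.orthogonalGroup (Fin d) ℝ)]
    [BorelSpace (Matrix.orthogonalGroup (Fin d) ℝ)] :
    MeasurableMul (Matrix.orthogonalGroup (Fin d) ℝ) := by
  have hcont : ∀ (f g : Matrix.orthogonalGroup (Fin d) ℝ → Matrix.orthogonalGroup (Fin d) ℝ),
      Continuous f → Continuous g → Continuous (fun x => f x * g x) := by
    intro f g hf hg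
    apply Continuous.subtype_mk
    exact Continuous.matrix_mul (continuous_subtype_val.comp hf) (continuous_subtype_val.comp hg)
  exact ⟨fun c => ((hcont _ _ continuous_const continuous_id).measurable),
         fun c => ((hcont _ _ continuous_id continuous_const).measurable)⟩

lemma haar_entry_prod {d : ℕ}
    [MeasurableSpace (Matrix.orthogonalGroup (Fin d) ℝ)]
    [BorelSpace (Matrix.orthogonalGroup (Fin d) ℝ)]
    (ν : Measure (Matrix.orthogonalGroup (Fin d) ℝ))
    [ν.IsHaarMeasure] [IsProbabilityMeasure ν] (b i j : Fin d) :
    ∫ Q, (Q : Matrix (Fin d) (Fin d) ℝ) b i * (Q : Matrix (Fin d) (Fin d) ℝ) b j ∂ν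
      = (if i = j then (1:ℝ) else 0) / d := by
  haveI : MeasurableMul (Matrix.orthogonalGroup (Fin d) ℝ) := measurableMul_og
  -- the integral is independent of the row b
  have hconst : ∀ b' : Fin d,
      ∫ Q, (Q : Matrix (Fin d) (Fin d) ℝ) b' i * (Q : Matrix (Fin d) (Fin d) ℝ) b' j ∂ν
        = ∫ Q, (Q : Matrix (Fin d) (Fin d) ℝ) b i * (Q : Matrix (Fin d) (Fin d) ℝ) b j ∂ν := by
    intro b'
    set e : Equiv.Perm (Fin d) := Equiv.swap b b' with he
    set G : Matrix.orthogonalGroup (Fin d) ℝ :=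
      ⟨Matrix.of fun x y : Fin d => if y = e x then (1:ℝ) else 0, permMat_mem e⟩ with hG
    have key := integral_mul_left_eq_self (μ := ν)
      (fun Q : Matrix.orthogonalGroup (Fin d) ℝ =>
        (Q : Matrix (Fin d) (Fin d) ℝ) b i * (Q : Matrix (Fin d) (Fin d) ℝ) b j) G
    have hentry : ∀ (Q : Matrix.orthogonalGroup (Fin d) ℝ) (y : Fin d),
        ((G * Q : Matrix.orthogonalGroup (Fin d) ℝ) : Matrix (Fin d) (Fin d) ℝ) b y
          = (Q : Matrix (Fin d) (Fin d) ℝ) b' y := by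
      intro Q y
      have : ((G * Q : Matrix.orthogonalGroup (Fin d) ℝ) : Matrix (Fin d) (Fin d) ℝ)
          = (G : Matrix (Fin d) (Fin d) ℝ) * (Q : Matrix (Fin d) (Fin d) ℝ) := rfl
      rw [this]
      simp only [hG, Matrix.mul_apply, Matrix.of_apply, ite_mul, one_mul, zero_mul]
      rw [Finset.sum_ite_eq' Finset.univ (e b)]
      simp [he, Equiv.swap_apply_left]
    rw [← key]
    congr 1
    funext Q
    rw [hentry Q i, hentry Q j]
  -- the sum over rows is deterministic
  have hsum : ∑ b' : Fin d,
      ∫ Q, (Q : Matrix (Fin d) (Fin d) ℝ) b' i * (Q : Matrix (Fin d) (Fin d) ℝ) b' j ∂ν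
      = if i = j then (1:ℝ) else 0 := by
    rw [← integral_finset_sum _ (fun b' _ => entry_prod_integrable ν b' b' i j)]
    have : ∀ Q : Matrix.orthogonalGroup (Fin d) ℝ,
        ∑ b' : Fin d, (Q : Matrix (Fin d) (Fin d) ℝ) b' i * (Q : Matrix (Fin d) (Fin d) ℝ) b' j
          = if i = j then (1:ℝ) else 0 := by
      intro Q
      have h1 : star (Q : Matrix (Fin d) (Fin d) ℝ) * (Q : Matrix (Fin d) (Fin d) ℝ) = 1 :=
        Q.prop.1
      have := congrFun (congrFun h1 i) j
      simp only [Matrix.mul_apply, Matrix.star_apply, star_trivial, Matrix.one_apply] at this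
      rw [← this]
    simp only [this]
    simp
  have hd : (0:ℝ) < d := by exact_mod_cast b.pos
  have : (d : ℝ) * ∫ Q, (Q : Matrix (Fin d) (Fin d) ℝ) b i * (Q : Matrix (Fin d) (Fin d) ℝ) b j ∂ν
      = if i = j then (1:ℝ) else 0 := by
    rw [← hsum, Finset.sum_congr rfl (fun b' _ => hconst b')]
    simp [mul_comm]
  field_simp
  linarith [this]

lemma moment_int {d n : ℕ} (μ : Measure (Fin d → ℝ)) (σ : ℝ)
    (hint : ∀ i j : Fin d, Integrable (fun x => x i * x j) μ)
    (hiso : ∀ i j : Fin d, ∫ x, x i * x j ∂μ = if i = j then σ ^ 2 else 0)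
    (B : Matrix (Fin n) (Fin d) ℝ) :
    Integrable (fun x => B.mulVec x ⬝ᵥ B.mulVec x) μ ∧
      ∫ x, B.mulVec x ⬝ᵥ B.mulVec x ∂μ = σ ^ 2 * ∑ m, ∑ i, (B m i) ^ 2 := by
  have hrw : ∀ x : Fin d → ℝ, B.mulVec x ⬝ᵥ B.mulVec x
      = ∑ m : Fin n, ∑ i : Fin d, ∑ i' : Fin d, B m i * B m i' * (x i * x i') := by
    intro x
    simp only [dotProduct, Matrix.mulVec]
    refine Finset.sum_congr rfl fun m _ => ?_
    rw [Finset.sum_mul_sum]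
    exact Finset.sum_congr rfl fun a _ => Finset.sum_congr rfl fun a' _ => by ring
  have hterm : ∀ (m : Fin n) (i i' : Fin d),
      Integrable (fun x : Fin d → ℝ => B m i * B m i' * (x i * x i')) μ :=
    fun m i i' => (hint i i').const_mul _
  have hInt : Integrable (fun x => ∑ m : Fin n, ∑ i : Fin d, ∑ i' : Fin d,
      B m i * B m i' * (x i * x i')) μ :=
    integrable_finset_sum _ fun m _ => integrable_finset_sum _ fun i _ =>
      integrable_finset_sum _ fun i' _ => hterm m i i'
  constructor
  · exact hInt.congr (by filter_upwards with x using (hrw x).symm)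
  · calc ∫ x, B.mulVec x ⬝ᵥ B.mulVec x ∂μ
        = ∫ x, ∑ m : Fin n, ∑ i : Fin d, ∑ i' : Fin d,
            B m i * B m i' * (x i * x i') ∂μ := by
          congr 1; funext x; exact hrw x
      _ = ∑ m : Fin n, ∑ i : Fin d, ∑ i' : Fin d,
            ∫ x, B m i * B m i' * (x i * x i') ∂μ := by
          rw [integral_finset_sum _ fun m _ => integrable_finset_sum _ fun i _ =>
            integrable_finset_sum _ fun i' _ => hterm m i i']
          exact Finset.sum_congr rfl fun m _ => by
            rw [integral_finset_sum _ fun i _ => integrable_finset_sum _ fun i' _ => hterm m i i']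
            exact Finset.sum_congr rfl fun i _ => by
              rw [integral_finset_sum _ fun i' _ => hterm m i i']
      _ = σ ^ 2 * ∑ m, ∑ i, (B m i) ^ 2 := by
          simp only [MeasureTheory.integral_const_mul, hiso, mul_ite, mul_zero,
            Finset.sum_ite_eq, Finset.mem_univ, if_true]
          rw [Finset.mul_sum]
          refine Finset.sum_congr rfl fun m _ => ?_
          rw [Finset.mul_sum]
          exact Finset.sum_congr rfl fun i _ => by ring

/-- two-sided null corollary, Prop. 3(a) + 3(c): if `g` is `L`-Lipschitz,
`f(x) = g(U_M x)` with `U_M` having orthonormal rows, `μ` has isotropic second moments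
of scale `σ²`, and `U(Q)` is the `k × d` matrix of the first `k` rows of a Haar-random
orthogonal matrix `Q`, then the Haar-expected mean-squared random-subspace ablation
effect satisfies `E_Q ∫ |f(x) − f(x − U(Q)ᵀU(Q)x)|² dμ ≤ L²σ²·k·k_M/d`. -/
theorem stmt_14 {d kM k : ℕ} (hkd : k ≤ d)
    (UM : Matrix (Fin kM) (Fin d) ℝ) (hUM : UM * UMᵀ = 1)
    (L : ℝ) (g : (Fin kM → ℝ) → ℝ)
    (hg : ∀ a b : Fin kM → ℝ, |g a - g b| ≤ L * euclNorm (a - b))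
    (μ : Measure (Fin d → ℝ)) [IsProbabilityMeasure μ] (σ : ℝ) (hσ : 0 ≤ σ)
    (hint : ∀ i j : Fin d, Integrable (fun x => x i * x j) μ)
    (hiso : ∀ i j : Fin d, ∫ x, x i * x j ∂μ = if i = j then σ ^ 2 else 0)
    [MeasurableSpace (Matrix.orthogonalGroup (Fin d) ℝ)]
    [BorelSpace (Matrix.orthogonalGroup (Fin d) ℝ)]
    (ν : Measure (Matrix.orthogonalGroup (Fin d) ℝ))
    [ν.IsHaarMeasure] [IsProbabilityMeasure ν] :
    ∫ Q, (∫ x,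
        |g (UM.mulVec x) -
          g (UM.mulVec (x -
            ((((Q : Matrix (Fin d) (Fin d) ℝ).submatrix (Fin.castLE hkd) id)ᵀ *
              ((Q : Matrix (Fin d) (Fin d) ℝ).submatrix (Fin.castLE hkd) id)).mulVec x)))| ^ 2
        ∂μ) ∂ν
      ≤ L ^ 2 * σ ^ 2 * ((k : ℝ) * kM / d) := by
  classical
  set A : Matrix.orthogonalGroup (Fin d) ℝ → Matrix (Fin d) (Fin d) ℝ := fun Q =>
    ((Q : Matrix (Fin d) (Fin d) ℝ).submatrix (Fin.castLE hkd) id)ᵀ *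
      ((Q : Matrix (Fin d) (Fin d) ℝ).submatrix (Fin.castLE hkd) id) with hA
  have hAentry : ∀ (Q : Matrix.orthogonalGroup (Fin d) ℝ) (j j' : Fin d),
      A Q j j' = ∑ a : Fin k,
        (Q : Matrix (Fin d) (Fin d) ℝ) (Fin.castLE hkd a) j *
        (Q : Matrix (Fin d) (Fin d) ℝ) (Fin.castLE hkd a) j' := by
    intro Q j j'
    simp only [hA, Matrix.mul_apply, Matrix.transpose_apply, Matrix.submatrix_apply, id]
  have hAA : ∀ Q : Matrix.orthogonalGroup (Fin d) ℝ, A Q * (A Q)ᵀ = A Q := by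
    intro Q
    set V : Matrix (Fin k) (Fin d) ℝ :=
      (Q : Matrix (Fin d) (Fin d) ℝ).submatrix (Fin.castLE hkd) id with hVdef
    have hVV : V * Vᵀ = (1 : Matrix (Fin k) (Fin k) ℝ) := by
      ext a b
      have h2 : (Q : Matrix (Fin d) (Fin d) ℝ) * star (Q : Matrix (Fin d) (Fin d) ℝ) = 1 :=
        Q.prop.2
      have h3 := congrFun (congrFun h2 (Fin.castLE hkd a)) (Fin.castLE hkd b)
      simp only [Matrix.mul_apply, Matrix.star_apply, star_trivial, Matrix.one_apply] at h3
      simp only [hVdef, Matrix.mul_apply, Matrix.transpose_apply, Matrix.submatrix_apply, id]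
      rw [h3, Matrix.one_apply]
      simp [(Fin.castLE_injective hkd).eq_iff]
    have : A Q = Vᵀ * V := by rw [hA]
    rw [this]
    rw [Matrix.transpose_mul, Matrix.transpose_transpose]
    calc Vᵀ * V * (Vᵀ * V) = Vᵀ * (V * Vᵀ) * V := by simp only [Matrix.mul_assoc]
      _ = Vᵀ * V := by rw [hVV, Matrix.mul_one]
  have hS : ∀ Q : Matrix.orthogonalGroup (Fin d) ℝ,
      ∑ m : Fin kM, ∑ i : Fin d, ((UM * A Q) m i) ^ 2
        = ∑ m : Fin kM, ∑ j : Fin d, ∑ j' : Fin d, UM m j * UM m j' * A Q j j' := by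
    intro Q
    have h1 : (UM * A Q) * (UM * A Q)ᵀ = UM * A Q * UMᵀ := by
      rw [Matrix.transpose_mul]
      calc UM * A Q * ((A Q)ᵀ * UMᵀ) = UM * (A Q * (A Q)ᵀ) * UMᵀ := by
            simp only [Matrix.mul_assoc]
        _ = UM * A Q * UMᵀ := by rw [hAA Q, Matrix.mul_assoc]
    calc ∑ m : Fin kM, ∑ i : Fin d, ((UM * A Q) m i) ^ 2
        = ∑ m : Fin kM, ((UM * A Q) * (UM * A Q)ᵀ) m m := by
          refine Finset.sum_congr rfl fun m _ => ?_
          simp only [Matrix.mul_apply, Matrix.transpose_apply, pow_two]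
      _ = ∑ m : Fin kM, (UM * A Q * UMᵀ) m m := by rw [h1]
      _ = ∑ m : Fin kM, ∑ j : Fin d, ∑ j' : Fin d, UM m j * UM m j' * A Q j j' := by
          refine Finset.sum_congr rfl fun m _ => ?_
          rw [Matrix.mul_assoc]
          simp only [Matrix.mul_apply, Matrix.transpose_apply]
          refine Finset.sum_congr rfl fun j _ => ?_
          rw [Finset.mul_sum]
          exact Finset.sum_congr rfl fun c _ => by ring
  have hAint : ∀ j j' : Fin d, Integrable (fun Q => A Q j j') ν := by
    intro j j'
    have hfe : (fun Q => A Q j j')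
        = fun Q : Matrix.orthogonalGroup (Fin d) ℝ => ∑ a : Fin k,
            (Q : Matrix (Fin d) (Fin d) ℝ) (Fin.castLE hkd a) j *
            (Q : Matrix (Fin d) (Fin d) ℝ) (Fin.castLE hkd a) j' :=
      funext fun Q => hAentry Q j j'
    rw [hfe]
    exact integrable_finset_sum _ fun a _ => entry_prod_integrable ν _ _ j j'
  have hAmean : ∀ j j' : Fin d,
      ∫ Q, A Q j j' ∂ν = (k : ℝ) * (if j = j' then (1:ℝ) else 0) / d := by
    intro j j'
    have hfe : (fun Q => A Q j j')
        = fun Q : Matrix.orthogonalGroup (Fin d) ℝ => ∑ a : Fin k,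
            (Q : Matrix (Fin d) (Fin d) ℝ) (Fin.castLE hkd a) j *
            (Q : Matrix (Fin d) (Fin d) ℝ) (Fin.castLE hkd a) j' :=
      funext fun Q => hAentry Q j j'
    rw [hfe, integral_finset_sum _ fun a _ => entry_prod_integrable ν _ _ j j']
    simp only [haar_entry_prod ν _ j j', Finset.sum_const, Finset.card_univ, Fintype.card_fin,
      nsmul_eq_mul]
    ring
  have hUMsum : ∑ m : Fin kM, ∑ j : Fin d, UM m j ^ 2 = (kM : ℝ) := by
    have hrow : ∀ m : Fin kM, ∑ j : Fin d, UM m j ^ 2 = 1 := by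
      intro m
      have h4 := congrFun (congrFun hUM m) m
      simp only [Matrix.mul_apply, Matrix.transpose_apply, Matrix.one_apply_eq] at h4
      rw [← h4]
      exact Finset.sum_congr rfl fun j _ => by ring
    simp [hrow]
  set H : Matrix.orthogonalGroup (Fin d) ℝ → ℝ := fun Q =>
    L ^ 2 * (σ ^ 2 * ∑ m : Fin kM, ∑ i : Fin d, ((UM * A Q) m i) ^ 2) with hH
  have hinner_le : ∀ Q : Matrix.orthogonalGroup (Fin d) ℝ,
      (∫ x, |g (UM.mulVec x) - g (UM.mulVec (x - (A Q).mulVec x))| ^ 2 ∂μ) ≤ H Q := by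
    intro Q
    have hmom := moment_int μ σ hint hiso (UM * A Q)
    have hpt : ∀ x : Fin d → ℝ,
        |g (UM.mulVec x) - g (UM.mulVec (x - (A Q).mulVec x))| ^ 2
          ≤ L ^ 2 * ((UM * A Q).mulVec x ⬝ᵥ (UM * A Q).mulVec x) := by
      intro x
      have hv : UM.mulVec x - UM.mulVec (x - (A Q).mulVec x) = (UM * A Q).mulVec x := by
        rw [Matrix.mulVec_sub, sub_sub_cancel, Matrix.mulVec_mulVec]
      have hb := hg (UM.mulVec x) (UM.mulVec (x - (A Q).mulVec x))
      rw [hv] at hb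
      have h2 := pow_le_pow_left₀ (abs_nonneg _) hb 2
      have hnn : (0:ℝ) ≤ (UM * A Q).mulVec x ⬝ᵥ (UM * A Q).mulVec x :=
        Finset.sum_nonneg fun i _ => mul_self_nonneg _
      refine h2.trans_eq ?_
      rw [mul_pow, euclNorm, Real.sq_sqrt hnn]
    calc (∫ x, |g (UM.mulVec x) - g (UM.mulVec (x - (A Q).mulVec x))| ^ 2 ∂μ)
        ≤ ∫ x, L ^ 2 * ((UM * A Q).mulVec x ⬝ᵥ (UM * A Q).mulVec x) ∂μ :=
          integral_mono_of_nonneg (Filter.Eventually.of_forall fun x => by positivity)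
            (hmom.1.const_mul _) (Filter.Eventually.of_forall hpt)
      _ = H Q := by rw [MeasureTheory.integral_const_mul, hmom.2]
  have hHint : Integrable H ν := by
    have hfe : H = fun Q => L ^ 2 * σ ^ 2 *
        ∑ m : Fin kM, ∑ j : Fin d, ∑ j' : Fin d, UM m j * UM m j' * A Q j j' := by
      funext Q
      show L ^ 2 * (σ ^ 2 * ∑ m : Fin kM, ∑ i : Fin d, ((UM * A Q) m i) ^ 2)
          = L ^ 2 * σ ^ 2 * ∑ m : Fin kM, ∑ j : Fin d, ∑ j' : Fin d, UM m j * UM m j' * A Q j j'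
      rw [hS Q]; ring
    rw [hfe]
    exact (integrable_finset_sum _ fun m _ => integrable_finset_sum _ fun j _ =>
      integrable_finset_sum _ fun j' _ => (hAint j j').const_mul _).const_mul _
  have hHval : ∫ Q, H Q ∂ν = L ^ 2 * σ ^ 2 * ((k : ℝ) * kM / d) := by
    have hfe : H = fun Q => L ^ 2 * σ ^ 2 *
        ∑ m : Fin kM, ∑ j : Fin d, ∑ j' : Fin d, UM m j * UM m j' * A Q j j' := by
      funext Q
      show L ^ 2 * (σ ^ 2 * ∑ m : Fin kM, ∑ i : Fin d, ((UM * A Q) m i) ^ 2)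
          = L ^ 2 * σ ^ 2 * ∑ m : Fin kM, ∑ j : Fin d, ∑ j' : Fin d, UM m j * UM m j' * A Q j j'
      rw [hS Q]; ring
    rw [hfe]
    rw [MeasureTheory.integral_const_mul]
    rw [integral_finset_sum _ fun m _ => integrable_finset_sum _ fun j _ =>
      integrable_finset_sum _ fun j' _ => (hAint j j').const_mul _]
    have hstep : ∀ m : Fin kM,
        (∫ Q, ∑ j : Fin d, ∑ j' : Fin d, UM m j * UM m j' * A Q j j' ∂ν)
          = ∑ j : Fin d, UM m j ^ 2 * ((k : ℝ) / d) := by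
      intro m
      rw [integral_finset_sum _ fun j _ => integrable_finset_sum _ fun j' _ =>
        (hAint j j').const_mul _]
      refine Finset.sum_congr rfl fun j _ => ?_
      rw [integral_finset_sum _ fun j' _ => (hAint j j').const_mul _]
      have : ∀ j' : Fin d, (∫ Q, UM m j * UM m j' * A Q j j' ∂ν)
          = UM m j * UM m j' * ((k : ℝ) * (if j = j' then (1:ℝ) else 0) / d) := by
        intro j'
        rw [MeasureTheory.integral_const_mul, hAmean j j']
      simp only [this]
      rw [Finset.sum_eq_single j]
      · rw [if_pos rfl]
        ring
      · intro b _ hb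
        simp [Ne.symm hb]
      · intro h
        exact absurd (Finset.mem_univ j) h
    simp only [hstep]
    have : ∑ m : Fin kM, ∑ j : Fin d, UM m j ^ 2 * ((k : ℝ) / d)
        = (∑ m : Fin kM, ∑ j : Fin d, UM m j ^ 2) * ((k : ℝ) / d) := by
      rw [Finset.sum_mul]
      exact Finset.sum_congr rfl fun m _ => (Finset.sum_mul _ _ _).symm
    rw [this, hUMsum]
    ring
  calc ∫ Q, (∫ x, |g (UM.mulVec x) - g (UM.mulVec (x - (A Q).mulVec x))| ^ 2 ∂μ) ∂ν
      ≤ ∫ Q, H Q ∂ν :=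
        integral_mono_of_nonneg
          (Filter.Eventually.of_forall fun Q =>
            integral_nonneg fun x => by positivity)
          hHint (Filter.Eventually.of_forall hinner_le)
    _ = L ^ 2 * σ ^ 2 * ((k : ℝ) * kM / d) := hHval
end
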